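/- arXiv:2408.15783 — 2 statements merged into one kernel-verified Lean document; each statement's English description precedes it below -/
import Mathlib

section
/- Let d ≥ 1, R > 0, let B_R ⊂ ℝ^d be a ball of radius R, let m ∈ L^∞(ℝ^d), and let φ be a Schwartz function on ℝ^d whose Fourier transform equals 1 on B(0,2). Set φ_R(ξ) := R^d φ(Rξ) and m_R := φ_R * m. Then, as bounded operators on L²(ℝ^d), 1_{B_R} m(D) 1_{B_R} = 1_{B_R} m_R(D) 1_{B_R}, where m(D) denotes the Fourier multiplier operator with symbol m and 1_{B_R} denotes multiplication by the indicator function of B_R. -/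
open MeasureTheory Complex Metric Set Filter
open scoped Real ENNReal Topology ComplexConjugate

noncomputable section

/-- Euclidean space `ℝ^d`. -/
abbrev Euc (d : ℕ) : Type := EuclideanSpace ℝ (Fin d)

/-- The unit sphere `S^{d-1} ⊆ ℝ^d`. -/
abbrev Sph (d : ℕ) : Type := Metric.sphere (0 : Euc d) 1

/-- The induced (surface) measure on the unit sphere. -/
instance sphereMeasureSpace (d : ℕ) : MeasureSpace (Sph d) :=
  ⟨(volume : Measure (Euc d)).toSphere⟩

/-- `L²(ℝ^d)`. -/
abbrev Ltwo (d : ℕ) := Lp ℂ 2 (volume : Measure (Euc d))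

/-- The dot product `x·ξ`, as a complex number. -/
def dotC {d : ℕ} (x ξ : Euc d) : ℂ := ((inner ℝ x ξ : ℝ) : ℂ)

/-- The `(n+1)`-st singular value of a continuous linear map between normed spaces, defined
as the approximation number `s_{n+1}(T) = inf {‖T - F‖ : rank F ≤ n}`; for operators between
Hilbert spaces this coincides with the usual singular values. -/
def sVal {H₁ H₂ : Type*} [NormedAddCommGroup H₁] [NormedSpace ℂ H₁]
    [NormedAddCommGroup H₂] [NormedSpace ℂ H₂] (T : H₁ →L[ℂ] H₂) (n : ℕ) : ℝ :=
  sInf {c : ℝ | ∃ F : H₁ →L[ℂ] H₂,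
    Module.rank ℂ (LinearMap.range F.toLinearMap) ≤ (n : Cardinal) ∧ c = ‖T - F‖}

/-- `T` belongs to the Schatten class `S^p` with `‖T‖_{S^p} ≤ C`. -/
def SchattenNormLE {H₁ H₂ : Type*} [NormedAddCommGroup H₁] [NormedSpace ℂ H₁]
    [NormedAddCommGroup H₂] [NormedSpace ℂ H₂] (p : ℝ) (T : H₁ →L[ℂ] H₂) (C : ℝ) : Prop :=
  Summable (fun n => sVal T n ^ p) ∧ (∑' n : ℕ, sVal T n ^ p) ^ (1 / p) ≤ C

/-- A function on `ℝ^d` is radial if it depends only on `|x|`. -/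
def IsRadial {d : ℕ} {α : Type*} (W : Euc d → α) : Prop :=
  ∀ x y : Euc d, ‖x‖ = ‖y‖ → W x = W y

/-- The `L^r` norm of a function on `ℝ^d`. -/
def lNorm {d : ℕ} (r : ℝ) (W : Euc d → ℂ) : ℝ :=
  (eLpNorm W (ENNReal.ofReal r) volume).toReal

/-- `z` lies in `ℂ ∖ [0,∞)`. -/
def OffHalfLine (z : ℂ) : Prop := ¬ (z.im = 0 ∧ 0 ≤ z.re)

/-- `δ(z) = dist(z, [0,∞))`. -/
def deltaDist (z : ℂ) : ℝ := Metric.infDist z {w : ℂ | w.im = 0 ∧ 0 ≤ w.re}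

/-- distance between two sets -/
def setDist {X : Type*} [PseudoMetricSpace X] (A B : Set X) : ℝ :=
  sInf (Set.image2 dist A B)

/-- `T` is the operator `W₁ m(D) W₂` on `L²(ℝ^d)`, characterized weakly (with the convention
`m(D) f = (2π)^{-d} ∫ e^{i x·ξ} m(ξ) f̂(ξ) dξ`, `f̂(ξ) = ∫ e^{-i y·ξ} f(y) dy`). -/
def IsSandwichedMultiplier {d : ℕ} (m W₁ W₂ : Euc d → ℂ) (T : Ltwo d →L[ℂ] Ltwo d) : Prop :=
  ∀ (f g : Euc d → ℂ) (hf : MemLp f 2 (volume : Measure (Euc d)))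
      (hg : MemLp g 2 (volume : Measure (Euc d))),
    Continuous f → HasCompactSupport f → Continuous g → HasCompactSupport g →
    (inner ℂ (hg.toLp g) (T (hf.toLp f)) : ℂ) =
      ((((2 * Real.pi) ^ d)⁻¹ : ℝ) : ℂ) *
        ∫ ξ : Euc d, m ξ *
          (∫ y : Euc d, Complex.exp (-(Complex.I * dotC y ξ)) * W₂ y * f y) *
          (∫ x : Euc d, Complex.exp (Complex.I * dotC x ξ) * W₁ x * (starRingEnd ℂ) (g x))

/-- The symbol of the free resolvent `(-Δ - z)⁻¹`. -/
def resolventSymbol {d : ℕ} (z : ℂ) (ξ : Euc d) : ℂ := (((‖ξ‖ ^ 2 : ℝ) : ℂ) - z)⁻¹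

/-- `χ` is a smooth radial cutoff equal to `1` on `B(0,2)` and supported in `B(0,4)`. -/
def IsLowCutoff {d : ℕ} (χ : Euc d → ℝ) : Prop :=
  ContDiff ℝ (⊤ : ℕ∞) χ ∧ IsRadial χ ∧ (∀ x ∈ Metric.ball (0 : Euc d) 2, χ x = 1) ∧
    Function.support χ ⊆ Metric.ball (0 : Euc d) 4

/-- The symbol of the low-energy resolvent `R₀(z)^{low}`. -/
def lowSymbol {d : ℕ} (χ : Euc d → ℝ) (z : ℂ) (ξ : Euc d) : ℂ :=
  resolventSymbol z ξ * ((χ ((Real.sqrt z.re)⁻¹ • ξ) : ℝ) : ℂ)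

/-- The Fourier extension operator `ℰ(λ)` of the unit sphere:
`ℰ(λ)g(x) = ∫_{S^{d-1}} e^{iλ x·ω} g(ω) dS(ω)`. -/
def fourierExt {d : ℕ} (lam : ℝ) (g : Sph d → ℂ) (x : Euc d) : ℂ :=
  ∫ ω : Sph d, Complex.exp (Complex.I * lam * dotC x (ω : Euc d)) * g ω

/-- `T` is the operator `W₁ ℰ ℰ* W₂` on `L²(ℝ^d)`, characterized weakly. -/
def IsSandwichedExtension {d : ℕ} (W₁ W₂ : Euc d → ℂ) (T : Ltwo d →L[ℂ] Ltwo d) : Prop :=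
  ∀ (f g : Euc d → ℂ) (hf : MemLp f 2 (volume : Measure (Euc d)))
      (hg : MemLp g 2 (volume : Measure (Euc d))),
    Continuous f → HasCompactSupport f → Continuous g → HasCompactSupport g →
    (inner ℂ (hg.toLp g) (T (hf.toLp f)) : ℂ) =
      ∫ ω : Sph d,
        (∫ y : Euc d, Complex.exp (-(Complex.I * dotC y (ω : Euc d))) * W₂ y * f y) *
        (∫ x : Euc d, Complex.exp (Complex.I * dotC x (ω : Euc d)) * W₁ x * (starRingEnd ℂ) (g x))

/-- The Bessel function of the first kind `J_μ` (for `μ > -1/2`), via the Poisson integral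
representation. -/
def besselJ (μ : ℝ) (x : ℝ) : ℝ :=
  (x / 2) ^ μ / (Real.Gamma (μ + 1 / 2) * Real.sqrt Real.pi) *
    ∫ t in (-1 : ℝ)..(1 : ℝ), Real.cos (x * t) * (1 - t ^ 2) ^ (μ - 1 / 2)

/-- The Laplacian of a function on `ℝ^d`. -/
def lap {d : ℕ} (φ : Euc d → ℂ) (x : Euc d) : ℂ :=
  ∑ i : Fin d, iteratedFDeriv ℝ 2 φ x (fun _ => EuclideanSpace.single i (1 : ℝ))

/-- `H f = z f + g` in the sense of distributions, where `H = -Δ + V`. -/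
def WeakSchrodinger {d : ℕ} (V : Euc d → ℂ) (z : ℂ) (f g : Euc d → ℂ) : Prop :=
  ∀ φ : Euc d → ℂ, ContDiff ℝ (⊤ : ℕ∞) φ → HasCompactSupport φ →
    (-∫ x : Euc d, f x * lap φ x) + ∫ x : Euc d, V x * f x * φ x =
      z * ∫ x : Euc d, f x * φ x + ∫ x : Euc d, g x * φ x

/-- `z` is an eigenvalue of `H = -Δ + V` on `L²(ℝ^d)`. -/
def IsSchrodingerEigenvalue (d : ℕ) (V : Euc d → ℂ) (z : ℂ) : Prop :=
  ∃ f : Euc d → ℂ, MemLp f 2 (volume : Measure (Euc d)) ∧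
    ¬ f =ᵐ[(volume : Measure (Euc d))] 0 ∧
    LocallyIntegrable (fun x => V x * f x) (volume : Measure (Euc d)) ∧
    WeakSchrodinger V z f 0

/-- Membership in the generalized (algebraic) eigenspace of `H = -Δ + V` at `z`,
  as a subset of `L²`: there is a finite Jordan chain ending at `0`. -/
def InGenEigenspace (d : ℕ) (V : Euc d → ℂ) (z : ℂ) (F : Ltwo d) : Prop :=
  ∃ (n : ℕ) (g : ℕ → Euc d → ℂ) (hg : ∀ i, MemLp (g i) 2 (volume : Measure (Euc d))),
    F = (hg 0).toLp (g 0) ∧ (∀ x, g n x = 0) ∧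
    ∀ i < n, LocallyIntegrable (fun x => V x * g i x) (volume : Measure (Euc d)) ∧
      WeakSchrodinger V z (g i) (g (i + 1))

/-- The algebraic multiplicity of `z` as an eigenvalue of `H = -Δ + V`. -/
def algMultiplicity (d : ℕ) (V : Euc d → ℂ) (z : ℂ) : Cardinal :=
  Module.rank ℂ (Submodule.span ℂ {F : Ltwo d | InGenEigenspace d V z F})

/-
Put `F = f̂ · conj ĝ`. Since `f` and `g` live in a ball of radius `R`, `F` is the Fourier transform
of a function supported in `B(0, 2R)`, where `φ̂_R = φ̂(·/R)` equals `1`; hence averaging the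
translates of `F` against `φ_R` reproduces it: `∫ φ_R(η) F(ξ + η) dη = F(ξ)`. Unfolding
`m_R = φ_R * m` and applying Fubini turns `∫ m_R F` into `∫ m F`. The Fubini step needs
`F ∈ L¹`, which holds because `f̂, ĝ ∈ L²` by Plancherel.
-/

open FourierTransform

theorem memLp_two_fourier_of_integrable {V : Type*} [NormedAddCommGroup V] [InnerProductSpace ℝ V]
    [FiniteDimensional ℝ V] [MeasurableSpace V] [BorelSpace V] {f : V → ℂ}
    (hf : Integrable f) (hf₂ : MemLp f 2) : MemLp (𝓕 f) 2 := by
  -- `𝓕 f` and the `L²` Fourier transform of `f` induce the same tempered distribution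
  have hcont : Continuous (𝓕 f) :=
    VectorFourier.fourierIntegral_continuous Real.continuous_fourierChar continuous_inner hf
  refine (Lp.memLp (𝓕 (hf₂.toLp f))).ae_eq (ae_eq_of_integral_contDiff_smul_eq
    ((Lp.memLp _).locallyIntegrable one_le_two) hcont.locallyIntegrable fun g hg hgc => ?_)
  let gS : SchwartzMap V ℂ := (hgc.comp_left Complex.ofReal_zero).toSchwartzMap
    (Complex.ofRealCLM.contDiff.comp hg)
  have hadjoint := VectorFourier.integral_fourierIntegral_smul_eq_flip (L := innerₗ V)
    (μ := volume) Real.continuous_fourierChar continuous_inner gS.integrable hf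
  rw [flip_innerₗ] at hadjoint
  calc ∫ x, g x • 𝓕 (hf₂.toLp f) x = Lp.toTemperedDistribution (𝓕 (hf₂.toLp f)) gS := by
        rw [Lp.toTemperedDistribution_apply]; rfl
    _ = Lp.toTemperedDistribution (hf₂.toLp f) (𝓕 gS) := by
        rw [← Lp.fourier_toTemperedDistribution_eq]; rfl
    _ = ∫ x, 𝓕 gS x • f x := by
        rw [Lp.toTemperedDistribution_apply]
        exact integral_congr_ae (hf₂.coeFn_toLp.mono fun x hx => by simp only [hx])
    _ = ∫ x, g x • 𝓕 f x := hadjoint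

theorem integral_integral_mul_sub_mul_eq {G : Type*} [AddGroup G] [MeasurableSpace G]
    [MeasurableAdd₂ G] [MeasurableNeg G] {μ : Measure G} [SFinite μ] [μ.IsAddRightInvariant]
    {ψ m F : G → ℂ} (hψ : Integrable ψ μ) (hm : MemLp m ∞ μ) (hF : Integrable F μ) :
    ∫ ξ, (∫ η, ψ η * m (ξ - η) ∂μ) * F ξ ∂μ = ∫ ξ, m ξ * ∫ η, ψ η * F (ξ + η) ∂μ ∂μ := by
  set K : G × G → ℂ := fun z => m (z.1 - z.2) * (F z.1 * ψ z.2)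
  have hsub := quasiMeasurePreserving_sub_of_right_invariant μ μ
  have hK : Integrable K (μ.prod μ) :=
    (hF.mul_prod hψ).bdd_mul (hm.1.comp_quasiMeasurePreserving hsub)
      (hsub.ae (ae_le_lpNorm_exponent_top hm))
  have hK' : Integrable (fun z : G × G => K (z.1 + z.2, z.2)) (μ.prod μ) :=
    (measurePreserving_add_prod μ μ).integrable_comp_of_integrable hK
  calc ∫ ξ, (∫ η, ψ η * m (ξ - η) ∂μ) * F ξ ∂μ = ∫ ξ, ∫ η, K (ξ, η) ∂μ ∂μ := by
        congr 1 with ξ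
        rw [← integral_mul_const]
        congr 1 with η
        ring
    _ = ∫ η, ∫ ξ, K (ξ, η) ∂μ ∂μ := integral_integral_swap hK
    _ = ∫ η, ∫ ξ, K (ξ + η, η) ∂μ ∂μ := by
        congr 1 with η
        exact (integral_add_right_eq_self (fun ξ => K (ξ, η)) η).symm
    _ = ∫ ξ, ∫ η, K (ξ + η, η) ∂μ ∂μ := (integral_integral_swap hK').symm
    _ = ∫ ξ, m ξ * ∫ η, ψ η * F (ξ + η) ∂μ ∂μ := by
        congr 1 with ξ
        rw [← integral_const_mul]
        congr 1 with η
        simp only [K, add_sub_cancel_right]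
        ring

theorem dotC_comm {d : ℕ} (x y : Euc d) : dotC x y = dotC y x := by
  rw [dotC, dotC, real_inner_comm]

theorem norm_exp_neg_I_mul_dotC {d : ℕ} (x ξ : Euc d) :
    ‖Complex.exp (-(Complex.I * dotC x ξ))‖ = 1 := by
  rw [Complex.norm_exp, dotC]
  simp

theorem exp_neg_I_mul_dotC_add {d : ℕ} (x ξ η : Euc d) :
    Complex.exp (-(Complex.I * dotC x (ξ + η))) =
      Complex.exp (-(Complex.I * dotC x ξ)) * Complex.exp (-(Complex.I * dotC η x)) := by
  rw [← Complex.exp_add, dotC, dotC, dotC, inner_add_right, real_inner_comm η]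
  push_cast
  ring_nf

theorem exp_neg_I_mul_dotC_sub {d : ℕ} (x y ξ : Euc d) :
    Complex.exp (-(Complex.I * dotC (x - y) ξ)) =
      Complex.exp (-(Complex.I * dotC x ξ)) * conj (Complex.exp (-(Complex.I * dotC y ξ))) := by
  rw [← Complex.exp_conj, ← Complex.exp_add, dotC, dotC, dotC, inner_sub_left]
  simp only [map_neg, map_mul, Complex.conj_I, Complex.conj_ofReal]
  push_cast
  ring_nf

def fourierHat {d : ℕ} (f : Euc d → ℂ) (ξ : Euc d) : ℂ :=
  ∫ x, f x * Complex.exp (-(Complex.I * dotC x ξ))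

theorem fourierHat_eq_fourier {d : ℕ} (f : Euc d → ℂ) (ξ : Euc d) :
    fourierHat f ξ = 𝓕 f ((2 * π)⁻¹ • ξ) := by
  rw [fourierHat, Real.fourier_eq']
  congr 1 with x
  rw [smul_eq_mul, mul_comm, dotC, real_inner_smul_right]
  congr 2
  push_cast
  field_simp

theorem continuous_fourierHat {d : ℕ} {f : Euc d → ℂ} (hf : Integrable f) :
    Continuous (fourierHat f) := by
  simp_rw [funext (fourierHat_eq_fourier f)]
  exact (VectorFourier.fourierIntegral_continuous Real.continuous_fourierChar continuous_inner
    hf).comp (continuous_const_smul _)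

theorem integrable_fourierHat_mul_conj {d : ℕ} {f g : Euc d → ℂ}
    (hf : Integrable f) (hf₂ : MemLp f 2) (hg : Integrable g) (hg₂ : MemLp g 2) :
    Integrable fun ξ => fourierHat f ξ * conj (fourierHat g ξ) := by
  have h : Integrable fun ξ => 𝓕 f ξ * conj (𝓕 g ξ) :=
    (memLp_two_fourier_of_integrable hf hf₂).integrable_mul
      (memLp_two_fourier_of_integrable hg hg₂).star (p := 2) (q := 2)
  simpa only [fourierHat_eq_fourier] using h.comp_smul (inv_ne_zero Real.two_pi_pos.ne')

theorem fourierHat_mul_conj_eq_integral_prod {d : ℕ} (f g : Euc d → ℂ) (ξ : Euc d) :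
    fourierHat f ξ * conj (fourierHat g ξ) =
      ∫ p : Euc d × Euc d, f p.1 * conj (g p.2) * Complex.exp (-(Complex.I * dotC (p.1 - p.2) ξ))
        ∂(volume.prod volume) := by
  rw [fourierHat, fourierHat, ← integral_conj, ← integral_prod_mul]
  congr 1 with p
  rw [exp_neg_I_mul_dotC_sub, map_mul]
  ring

theorem fourierHat_dilate {d : ℕ} (ψ : Euc d → ℂ) {R : ℝ} (hR : 0 < R) (w : Euc d) :
    fourierHat (fun η => ((R ^ d : ℝ) : ℂ) * ψ (R • η)) w = fourierHat ψ (R⁻¹ • w) := by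
  have h := Measure.integral_comp_smul (μ := (volume : Measure (Euc d)))
    (fun u => ψ u * Complex.exp (-(Complex.I * dotC u (R⁻¹ • w)))) R
  simp only [finrank_euclideanSpace_fin, dotC, real_inner_smul_left, real_inner_smul_right,
    inv_mul_cancel_left₀ hR.ne', abs_of_pos (inv_pos.2 (pow_pos hR d))] at h
  simp only [fourierHat, dotC, real_inner_smul_right, mul_assoc]
  rw [integral_const_mul, h, Complex.real_smul, ← mul_assoc, ← Complex.ofReal_mul,
    mul_inv_cancel₀ (pow_pos hR d).ne', Complex.ofReal_one, one_mul]

theorem fourierHat_eqOn_closedBall_of_eqOn_ball {d : ℕ} {ψ : Euc d → ℂ} (hψ : Integrable ψ)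
    {r : ℝ} (hr : r ≠ 0) (h : EqOn (fourierHat ψ) 1 (ball 0 r)) :
    EqOn (fourierHat ψ) 1 (closedBall 0 r) := by
  rw [← closure_ball 0 hr]
  exact h.closure (continuous_fourierHat hψ) continuous_const

theorem integral_mul_fourierHat_mul_conj_add {d : ℕ} {R : ℝ} {x₀ : Euc d} {f g ψ : Euc d → ℂ}
    (hf : Integrable f) (hg : Integrable g) (hψ : Integrable ψ)
    (hsf : Function.support f ⊆ closedBall x₀ R) (hsg : Function.support g ⊆ closedBall x₀ R)
    (hψ_one : EqOn (fourierHat ψ) 1 (closedBall 0 (2 * R))) (ξ : Euc d) :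
    ∫ η, ψ η * (fourierHat f (ξ + η) * conj (fourierHat g (ξ + η))) =
      fourierHat f ξ * conj (fourierHat g ξ) := by
  set k : Euc d × Euc d → ℂ := fun p => f p.1 * conj (g p.2)
  set e : Euc d × Euc d → Euc d → ℂ := fun p ζ => Complex.exp (-(Complex.I * dotC (p.1 - p.2) ζ))
  -- on the support of `k`, `‖p.1 - p.2‖ ≤ 2R`, where `ψ̂ = 1`
  have hk : ∀ p, k p * fourierHat ψ (p.1 - p.2) = k p := by
    intro p
    by_cases h0 : k p = 0
    · rw [h0, zero_mul]
    have h₁ := mem_closedBall.1 (hsf (left_ne_zero_of_mul h0))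
    have h₂ := mem_closedBall.1 (hsg (show g p.2 ≠ 0 from fun h => h0 (by simp [k, h])))
    rw [hψ_one (mem_closedBall_zero_iff.2 ?_), Pi.one_apply, mul_one]
    rw [← dist_eq_norm]
    linarith [dist_triangle_right p.1 p.2 x₀]
  have hint : Integrable (fun q : Euc d × (Euc d × Euc d) => ψ q.1 * (k q.2 * e q.2 (ξ + q.1)))
      (volume.prod (volume.prod volume)) := by
    have he : Continuous fun q : Euc d × (Euc d × Euc d) => e q.2 (ξ + q.1) := by
      simp only [e, dotC]; fun_prop
    refine (hψ.norm.mul_prod (hf.norm.mul_prod hg.norm)).mono'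
      (hψ.1.comp_fst.mul (((hf.1.comp_fst.mul hg.1.star.comp_snd).comp_snd).mul
        he.aestronglyMeasurable)) (.of_forall fun q => le_of_eq ?_)
    simp [k, e, norm_exp_neg_I_mul_dotC]
  calc ∫ η, ψ η * (fourierHat f (ξ + η) * conj (fourierHat g (ξ + η)))
      = ∫ η, ∫ p, ψ η * (k p * e p (ξ + η)) ∂(volume.prod volume) := by
        congr 1 with η
        rw [fourierHat_mul_conj_eq_integral_prod, ← integral_const_mul]
    _ = ∫ p, (∫ η, ψ η * (k p * e p (ξ + η))) ∂(volume.prod volume) :=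
        integral_integral_swap hint
    _ = ∫ p, k p * fourierHat ψ (p.1 - p.2) * e p ξ ∂(volume.prod volume) := by
        congr 1 with p
        simp only [e, exp_neg_I_mul_dotC_add, fourierHat, dotC_comm _ (p.1 - p.2)]
        rw [mul_right_comm, ← integral_const_mul]
        congr 1 with η
        ring
    _ = fourierHat f ξ * conj (fourierHat g ξ) := by
        simp_rw [hk]
        exact (fourierHat_mul_conj_eq_integral_prod f g ξ).symm

theorem stmt_16_general (d : ℕ) (R : ℝ) (hR : 0 < R) (x₀ : Euc d)
    (m : Euc d → ℂ) (hm : MemLp m ⊤ (volume : Measure (Euc d)))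
    (φ : SchwartzMap (Euc d) ℂ)
    (hφ : ∀ x ∈ Metric.ball (0 : Euc d) 2,
      (∫ u : Euc d, φ u * Complex.exp (-(Complex.I * dotC x u))) = 1) :
    ∀ f g : Euc d → ℂ, Continuous f → Continuous g →
      Function.support f ⊆ Metric.closedBall x₀ R →
      Function.support g ⊆ Metric.closedBall x₀ R →
      (∫ ξ : Euc d, m ξ *
          (∫ x : Euc d, f x * Complex.exp (-(Complex.I * dotC x ξ))) *
          (starRingEnd ℂ) (∫ x : Euc d, g x * Complex.exp (-(Complex.I * dotC x ξ)))) =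
      ∫ ξ : Euc d,
          (∫ η : Euc d, ((R ^ d : ℝ) : ℂ) * φ (R • η) * m (ξ - η)) *
          (∫ x : Euc d, f x * Complex.exp (-(Complex.I * dotC x ξ))) *
          (starRingEnd ℂ) (∫ x : Euc d, g x * Complex.exp (-(Complex.I * dotC x ξ))) := by
  intro f g hf hg hsf hsg
  have hcf := HasCompactSupport.of_support_subset_isCompact (isCompact_closedBall x₀ R) hsf
  have hcg := HasCompactSupport.of_support_subset_isCompact (isCompact_closedBall x₀ R) hsg
  have hfi : Integrable f := hf.integrable_of_hasCompactSupport hcf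
  have hgi : Integrable g := hg.integrable_of_hasCompactSupport hcg
  set ψ : Euc d → ℂ := fun η => ((R ^ d : ℝ) : ℂ) * φ (R • η)
  have hψ : Integrable ψ := (φ.integrable.comp_smul hR.ne').const_mul _
  have hφ_one : EqOn (fourierHat φ) 1 (closedBall 0 2) :=
    fourierHat_eqOn_closedBall_of_eqOn_ball φ.integrable two_ne_zero fun x hx => by
      simp_rw [fourierHat, dotC_comm _ x]
      exact hφ x hx
  have hψ_one : EqOn (fourierHat ψ) 1 (closedBall 0 (2 * R)) := by
    intro w hw
    rw [fourierHat_dilate φ hR]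
    refine hφ_one (mem_closedBall_zero_iff.2 ?_)
    rw [norm_smul, norm_inv, Real.norm_of_nonneg hR.le, inv_mul_le_iff₀ hR, mul_comm]
    exact mem_closedBall_zero_iff.1 hw
  have key := integral_integral_mul_sub_mul_eq hψ hm (integrable_fourierHat_mul_conj hfi
    (hf.memLp_of_hasCompactSupport hcf) hgi (hg.memLp_of_hasCompactSupport hcg))
  simp only [integral_mul_fourierHat_mul_conj_add hfi hgi hψ hsf hsg hψ_one] at key
  simp only [fourierHat, ψ, mul_assoc] at key ⊢
  exact key.symm

/-- Smoothing of a Fourier multiplier by spatial localization: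
`1_{B_R} m(D) 1_{B_R} = 1_{B_R} m_R(D) 1_{B_R}` with `m_R = φ_R * m`, stated weakly via the
pairings `⟨g, m(D) f⟩ = (2π)^{-d} ∫ m ξ f̂(ξ) conj(ĝ(ξ)) dξ` for `f, g` continuous and supported
in the ball `B_R = B(x₀, R)`. -/
theorem stmt_16 (d : ℕ) (hd : 1 ≤ d) (R : ℝ) (hR : 0 < R) (x₀ : Euc d)
    (m : Euc d → ℂ) (hm : MemLp m ⊤ (volume : Measure (Euc d)))
    (φ : SchwartzMap (Euc d) ℂ)
    (hφ : ∀ x ∈ Metric.ball (0 : Euc d) 2,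
      (∫ u : Euc d, φ u * Complex.exp (-(Complex.I * dotC x u))) = 1) :
    ∀ f g : Euc d → ℂ, Continuous f → Continuous g →
      Function.support f ⊆ Metric.closedBall x₀ R →
      Function.support g ⊆ Metric.closedBall x₀ R →
      (∫ ξ : Euc d, m ξ *
          (∫ x : Euc d, f x * Complex.exp (-(Complex.I * dotC x ξ))) *
          (starRingEnd ℂ) (∫ x : Euc d, g x * Complex.exp (-(Complex.I * dotC x ξ)))) =
      ∫ ξ : Euc d,
          (∫ η : Euc d, ((R ^ d : ℝ) : ℂ) * φ (R • η) * m (ξ - η)) *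
          (∫ x : Euc d, f x * Complex.exp (-(Complex.I * dotC x ξ))) *
          (starRingEnd ℂ) (∫ x : Euc d, g x * Complex.exp (-(Complex.I * dotC x ξ))) :=
  stmt_16_general d R hR x₀ m hm φ hφ
end
end

section
/- Let d ≥ 1, N ∈ ℕ, R, R' > 0 and L > 0, and let {B(x_k, R)}_{k=1}^N be balls in ℝ^d whose centers are pairwise L-separated, with L ≥ (NR)^γ + 2R + 4R' for some γ > 0. Let B' = B(y, R') be any ball of radius R'. Then dist(B(x_k, R), B') ≥ (NR)^γ / 2 for all but at most one index k ∈ {1, …, N}. Consequently, for any s > 0 with γ s ≥ 1 and NR ≥ 2^{1/γ}, Σ_{k=1}^N (1 + dist(B(x_k, R), B'))^{−s} ≤ 1 + 2^s N (NR)^{−γ s}. -/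
open MeasureTheory Complex Metric Set Filter
open scoped Real ENNReal Topology ComplexConjugate

noncomputable section

/-! If two balls `B(x_j, R)`, `B(x_k, R)` were both within `(NR)^γ / 2` of `B(y, R')`, the triangle
inequality through `y` would give `|x_j - x_k| < (NR)^γ + 2R + 2R' ≤ L`, contradicting separation.
So at most one term of the sum is bounded only by `1`; every other term is at most
`((NR)^γ / 2)^{-s} = 2^s (NR)^{-γ s}`. -/

open Finset

section SetDist

variable {X : Type*} [PseudoMetricSpace X]

lemma setDist_nonneg (A B : Set X) : 0 ≤ setDist A B :=
  Real.sInf_nonneg <| by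
    rintro _ ⟨a, -, b, -, rfl⟩
    exact dist_nonneg

lemma dist_sub_sub_le_setDist_closedBall {a b : X} {r r' : ℝ} (hr : 0 ≤ r) (hr' : 0 ≤ r') :
    dist a b - r - r' ≤ setDist (closedBall a r) (closedBall b r') := by
  refine le_csInf
    ⟨dist a b, mem_image2_of_mem (mem_closedBall_self hr) (mem_closedBall_self hr')⟩ ?_
  rintro _ ⟨p, hp, q, hq, rfl⟩
  rw [mem_closedBall'] at hp
  rw [mem_closedBall] at hq
  linarith [dist_triangle4 a p q b]

lemma dist_sub_le_setDist_add_setDist_closedBall (a b y : X) {r r' : ℝ} (hr : 0 ≤ r)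
    (hr' : 0 ≤ r') :
    dist a b - 2 * r - 2 * r' ≤
      setDist (closedBall a r) (closedBall y r') + setDist (closedBall b r) (closedBall y r') := by
  linarith [dist_triangle_right a b y, dist_sub_sub_le_setDist_closedBall (a := a) (b := y) hr hr',
    dist_sub_sub_le_setDist_closedBall (a := b) (b := y) hr hr']

lemma card_filter_setDist_closedBall_lt_le_one {ι : Type*} [Fintype ι] {x : ι → X} {y : X}
    {r r' L M : ℝ} (hr : 0 ≤ r) (hr' : 0 ≤ r') (hsep : Pairwise fun j k ↦ L ≤ dist (x j) (x k))
    (hL : M + 2 * r + 2 * r' ≤ L) :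
    #{k | setDist (closedBall (x k) r) (closedBall y r') < M / 2} ≤ 1 := by
  refine card_le_one.2 fun j hj k hk ↦ by_contra fun hjk ↦ ?_
  rw [mem_filter] at hj hk
  linarith [hsep hjk, dist_sub_le_setDist_add_setDist_closedBall (x j) (x k) y hr hr']

end SetDist

lemma sum_le_card_add_card_mul {ι : Type*} [Fintype ι] (S : Finset ι) {f : ι → ℝ} {c : ℝ}
    (hc : 0 ≤ c) (hS : ∀ k ∈ S, f k ≤ 1) (hSc : ∀ k ∉ S, f k ≤ c) :
    ∑ k, f k ≤ #S + Fintype.card ι * c := by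
  classical
  rw [← sum_add_sum_compl S f]
  gcongr ?_ + ?_
  · simpa using sum_le_card_nsmul S f 1 hS
  · calc ∑ k ∈ Sᶜ, f k ≤ #Sᶜ • c := sum_le_card_nsmul _ _ _ fun k hk ↦ hSc k (mem_compl.1 hk)
      _ ≤ Fintype.card ι * c := by
        rw [nsmul_eq_mul]
        gcongr
        exact_mod_cast card_le_univ Sᶜ

lemma rpow_neg_le_two_rpow_mul_rpow_neg {M t s : ℝ} (hM : 0 < M) (ht : M / 2 ≤ t) (hs : 0 ≤ s) :
    t ^ (-s) ≤ 2 ^ s * M ^ (-s) :=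
  calc t ^ (-s) ≤ (M / 2) ^ (-s) := Real.rpow_le_rpow_of_nonpos (by positivity) ht (by linarith)
    _ = 2 ^ s * M ^ (-s) := by
      rw [Real.div_rpow hM.le zero_le_two, Real.rpow_neg zero_le_two, div_inv_eq_mul, mul_comm]

theorem stmt_19_general (d : ℕ) (N : ℕ) (R R' L γ : ℝ)
    (hR : 0 < R) (hR' : 0 < R')
    (x : Fin N → Euc d) (hsep : ∀ j k : Fin N, j ≠ k → L ≤ dist (x j) (x k))
    (hLlarge : ((N : ℝ) * R) ^ γ + 2 * R + 4 * R' ≤ L) (y : Euc d) :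
    (∃ S : Finset (Fin N), S.card ≤ 1 ∧ ∀ k ∉ S,
      ((N : ℝ) * R) ^ γ / 2 ≤ setDist (Metric.closedBall (x k) R) (Metric.closedBall y R')) ∧
    ∀ s : ℝ, 0 < s → 1 ≤ γ * s → (2 : ℝ) ^ (1 / γ) ≤ (N : ℝ) * R →
      ∑ k : Fin N,
          (1 + setDist (Metric.closedBall (x k) R) (Metric.closedBall y R')) ^ (-s) ≤
        1 + 2 ^ s * (N : ℝ) * ((N : ℝ) * R) ^ (-(γ * s)) := by
  classical
  set D : Fin N → ℝ := fun k ↦ setDist (closedBall (x k) R) (closedBall y R')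
  set S : Finset (Fin N) := {k | D k < ((N : ℝ) * R) ^ γ / 2}
  have hS : #S ≤ 1 := card_filter_setDist_closedBall_lt_le_one hR.le hR'.le
    (fun j k ↦ hsep j k) (by linarith)
  have hD_far : ∀ k ∉ S, ((N : ℝ) * R) ^ γ / 2 ≤ D k := fun k hk ↦ by simpa [S] using hk
  refine ⟨⟨S, hS, hD_far⟩, fun s hs _ hNR ↦ ?_⟩
  have hNR0 : 0 < (N : ℝ) * R := (Real.rpow_pos_of_pos two_pos _).trans_le hNR
  have hD0 : ∀ k, 0 ≤ D k := fun k ↦ setDist_nonneg _ _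
  have hterm_near : ∀ k ∈ S, (1 + D k) ^ (-s) ≤ 1 := fun k _ ↦
    Real.rpow_le_one_of_one_le_of_nonpos (by linarith [hD0 k]) (by linarith)
  have hterm_far : ∀ k ∉ S, (1 + D k) ^ (-s) ≤ 2 ^ s * ((N : ℝ) * R) ^ (-(γ * s)) := fun k hk ↦ by
    rw [← mul_neg, Real.rpow_mul hNR0.le]
    exact rpow_neg_le_two_rpow_mul_rpow_neg (by positivity)
      (by linarith [hD_far k hk, hD0 k]) hs.le
  calc ∑ k, (1 + D k) ^ (-s)
      ≤ #S + Fintype.card (Fin N) * (2 ^ s * ((N : ℝ) * R) ^ (-(γ * s))) :=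
        sum_le_card_add_card_mul S (by positivity) hterm_near hterm_far
    _ ≤ 1 + 2 ^ s * (N : ℝ) * ((N : ℝ) * R) ^ (-(γ * s)) := by
        rw [Fintype.card_fin, ← mul_assoc, mul_comm (N : ℝ)]
        gcongr
        exact_mod_cast hS

/-- Sparse balls: all but at most one ball of a separated family is far from a
fixed ball `B' = B(y, R')`, and the resulting sum bound. -/
theorem stmt_19 (d : ℕ) (hd : 1 ≤ d) (N : ℕ) (R R' L γ : ℝ)
    (hR : 0 < R) (hR' : 0 < R') (hL : 0 < L) (hγ : 0 < γ)
    (x : Fin N → Euc d) (hsep : ∀ j k : Fin N, j ≠ k → L ≤ dist (x j) (x k))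
    (hLlarge : ((N : ℝ) * R) ^ γ + 2 * R + 4 * R' ≤ L) (y : Euc d) :
    (∃ S : Finset (Fin N), S.card ≤ 1 ∧ ∀ k ∉ S,
      ((N : ℝ) * R) ^ γ / 2 ≤ setDist (Metric.closedBall (x k) R) (Metric.closedBall y R')) ∧
    ∀ s : ℝ, 0 < s → 1 ≤ γ * s → (2 : ℝ) ^ (1 / γ) ≤ (N : ℝ) * R →
      ∑ k : Fin N,
          (1 + setDist (Metric.closedBall (x k) R) (Metric.closedBall y R')) ^ (-s) ≤
        1 + 2 ^ s * (N : ℝ) * ((N : ℝ) * R) ^ (-(γ * s)) :=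
  stmt_19_general d N R R' L γ hR hR' x hsep hLlarge y
end
end
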